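/- Nonnegativity of the in-phase component: let v(τ) = p̄ sin τ + q̄ cos τ for fixed p̄, q̄ ∈ R^n and fix a > 0. Then T₁(a) := (1/(2π)) ∫₀^{2π} v(τ)·σ(a v(τ)) dτ ≥ 0. Moreover T₁(a) > 0 whenever at least one of p̄, q̄ is not a scalar multiple of 1_n. -/

import Mathlib

open Real

noncomputable def softmax {n : ℕ} (v : Fin n → ℝ) : Fin n → ℝ :=
  fun i => Real.exp (v i) / ∑ j, Real.exp (v j)

/-!
Write `m_a(u) = u · σ(a u)` for the mean of `u` under the Gibbs weights `σ(a u)`. Since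
`v(τ + π) = -v(τ)`, the integral over `[0, 2π]` folds to `∫₀^π (m_a(v) + m_a(-v))`, and
`m_a(-u) = -m_{-a}(u)`. The Gibbs mean is monotone in the inverse temperature: symmetrising
the double sum for `m_a(u) - m_b(u)` gives terms `(uᵢ - uⱼ)(e^{a uᵢ + b uⱼ} - e^{a uⱼ + b uᵢ})`,
which are nonnegative for `b ≤ a` and positive for `b < a`, `uᵢ ≠ uⱼ`. So the folded integrand
is nonnegative, and it is positive at `τ = π/2` (where `v = p̄`) or `τ = 0` (where `v = q̄`).
-/

open Finset

lemma sub_mul_exp_sub_exp_nonneg {a b x y : ℝ} (hba : b ≤ a) :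
    0 ≤ (x - y) * (exp (a * x + b * y) - exp (a * y + b * x)) := by
  rcases le_total y x with hyx | hxy
  · exact mul_nonneg (sub_nonneg.2 hyx) (sub_nonneg.2 (exp_le_exp.2 (by nlinarith)))
  · exact mul_nonneg_of_nonpos_of_nonpos (sub_nonpos.2 hxy)
      (sub_nonpos.2 (exp_le_exp.2 (by nlinarith)))

lemma sub_mul_exp_sub_exp_pos {a b x y : ℝ} (hba : b < a) (hxy : x ≠ y) :
    0 < (x - y) * (exp (a * x + b * y) - exp (a * y + b * x)) := by
  rcases hxy.lt_or_gt with hxy | hyx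
  · exact mul_pos_of_neg_of_neg (sub_neg.2 hxy) (sub_neg.2 (exp_lt_exp.2 (by nlinarith)))
  · exact mul_pos (sub_pos.2 hyx) (sub_pos.2 (exp_lt_exp.2 (by nlinarith)))

lemma two_mul_sum_sum_eq_sum_sum_add_swap {ι : Type*} [Fintype ι] (f : ι → ι → ℝ) :
    2 * ∑ i, ∑ j, f i j = ∑ i, ∑ j, (f i j + f j i) := by
  simp only [sum_add_distrib]
  rw [sum_comm (f := fun i j => f j i)]
  ring

lemma exists_apply_ne_of_not_exists_eq_const {ι α : Type*} [Nonempty α] {u : ι → α}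
    (hu : ¬ ∃ c, u = fun _ => c) : ∃ i j, u i ≠ u j := by
  by_contra! h
  rcases isEmpty_or_nonempty ι with hι | ⟨⟨i⟩⟩
  · exact hu ⟨Classical.arbitrary α, funext isEmptyElim⟩
  · exact hu ⟨u i, funext fun j => h j i⟩

section Softmax

variable {n : ℕ}

lemma continuous_softmax : Continuous (softmax : (Fin n → ℝ) → Fin n → ℝ) :=
  continuous_pi fun i => ((continuous_apply i).rexp).div
    (continuous_finsetSum _ fun j _ => (continuous_apply j).rexp)
    fun v => (sum_pos (fun j _ => exp_pos (v j)) ⟨i, mem_univ i⟩).ne'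

/-- The Gibbs mean of `u` at inverse temperature `a`. -/
noncomputable def softmaxMean (a : ℝ) (u : Fin n → ℝ) : ℝ :=
  ∑ i, u i * softmax (a • u) i

lemma continuous_softmaxMean (a : ℝ) : Continuous (softmaxMean (n := n) a) :=
  continuous_finsetSum _ fun i _ => (continuous_apply i).mul
    ((continuous_apply i).comp (continuous_softmax.comp (continuous_const_smul a)))

lemma softmaxMean_neg (a : ℝ) (u : Fin n → ℝ) : softmaxMean a (-u) = -softmaxMean (-a) u := by
  simp only [softmaxMean, smul_neg, ← neg_smul, Pi.neg_apply, neg_mul, sum_neg_distrib]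

lemma softmaxMean_eq (a : ℝ) (u : Fin n → ℝ) :
    softmaxMean a u = (∑ i, u i * exp (a * u i)) / ∑ i, exp (a * u i) := by
  simp only [softmaxMean, softmax, Pi.smul_apply, smul_eq_mul, mul_div_assoc', sum_div]

lemma softmaxMean_sub_softmaxMean (a b : ℝ) (u : Fin n → ℝ) :
    softmaxMean a u - softmaxMean b u =
      (∑ i, ∑ j, (u i - u j) * (exp (a * u i + b * u j) - exp (a * u j + b * u i))) /
        (2 * (∑ i, exp (a * u i)) * ∑ i, exp (b * u i)) := by
  rcases isEmpty_or_nonempty (Fin n) with hn | hn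
  · simp [softmaxMean]
  have hA : 0 < ∑ i, exp (a * u i) := sum_pos (fun i _ => exp_pos _) univ_nonempty
  have hB : 0 < ∑ i, exp (b * u i) := sum_pos (fun i _ => exp_pos _) univ_nonempty
  have hnum : ∑ i, ∑ j, (u i - u j) * exp (a * u i + b * u j) =
      (∑ i, u i * exp (a * u i)) * (∑ j, exp (b * u j)) -
        (∑ i, exp (a * u i)) * ∑ j, u j * exp (b * u j) := by
    simp only [exp_add, sum_mul_sum, ← sum_sub_distrib]
    exact sum_congr rfl fun i _ => sum_congr rfl fun j _ => by ring
  have hsymm : ∑ i, ∑ j, (u i - u j) * (exp (a * u i + b * u j) - exp (a * u j + b * u i)) =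
      2 * ∑ i, ∑ j, (u i - u j) * exp (a * u i + b * u j) := by
    rw [two_mul_sum_sum_eq_sum_sum_add_swap]
    exact sum_congr rfl fun i _ => sum_congr rfl fun j _ => by ring
  rw [softmaxMean_eq, softmaxMean_eq, hsymm, hnum, div_sub_div _ _ hA.ne' hB.ne', mul_assoc 2,
    mul_div_mul_left _ _ two_ne_zero]

theorem softmaxMean_mono (u : Fin n → ℝ) : Monotone fun a => softmaxMean a u := by
  intro b a hba
  rw [← sub_nonneg, softmaxMean_sub_softmaxMean]
  exact div_nonneg (sum_nonneg fun i _ => sum_nonneg fun j _ => sub_mul_exp_sub_exp_nonneg hba)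
    (by positivity)

theorem softmaxMean_strictMono {u : Fin n → ℝ} (hu : ∃ i j, u i ≠ u j) :
    StrictMono fun a => softmaxMean a u := by
  intro b a hba
  obtain ⟨i, j, hij⟩ := hu
  have hpos : ∀ i j, 0 ≤ (u i - u j) * (exp (a * u i + b * u j) - exp (a * u j + b * u i)) :=
    fun i j => sub_mul_exp_sub_exp_nonneg hba.le
  rw [← sub_pos, softmaxMean_sub_softmaxMean]
  refine div_pos (sum_pos' (fun i _ => sum_nonneg fun j _ => hpos i j) ⟨i, mem_univ i, ?_⟩)
    (by have : Nonempty (Fin n) := ⟨i⟩; positivity)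
  exact sum_pos' (fun j _ => hpos i j) ⟨j, mem_univ j, sub_mul_exp_sub_exp_pos hba hij⟩

lemma softmaxMean_add_softmaxMean_neg_nonneg {a : ℝ} (ha : 0 ≤ a) (u : Fin n → ℝ) :
    0 ≤ softmaxMean a u + softmaxMean a (-u) := by
  rw [softmaxMean_neg, ← sub_eq_add_neg, sub_nonneg]
  exact softmaxMean_mono u (by linarith)

lemma softmaxMean_add_softmaxMean_neg_pos {a : ℝ} (ha : 0 < a) {u : Fin n → ℝ}
    (hu : ∃ i j, u i ≠ u j) : 0 < softmaxMean a u + softmaxMean a (-u) := by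
  rw [softmaxMean_neg, ← sub_eq_add_neg, sub_pos]
  exact softmaxMean_strictMono hu (by linarith)

end Softmax

lemma integral_zero_two_mul_eq_integral_add_shift {F : ℝ → ℝ} (hF : Continuous F) (T : ℝ) :
    ∫ x in 0..2 * T, F x = ∫ x in 0..T, (F x + F (x + T)) := by
  have hshift : Continuous fun x => F (x + T) := hF.comp (continuous_add_const T)
  rw [intervalIntegral.integral_add (hF.intervalIntegrable _ _) (hshift.intervalIntegrable _ _),
    intervalIntegral.integral_comp_add_right, zero_add, two_mul,
    intervalIntegral.integral_add_adjacent_intervals (hF.intervalIntegrable _ _)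
      (hF.intervalIntegrable _ _)]

theorem in_phase_component_nonneg (n : ℕ) (pbar qbar : Fin n → ℝ) (a : ℝ) (ha : 0 < a) :
    0 ≤ (1 / (2 * π)) * ∫ τ in (0:ℝ)..(2 * π),
          ∑ i, (Real.sin τ * pbar i + Real.cos τ * qbar i) *
            softmax (a • (Real.sin τ • pbar + Real.cos τ • qbar)) i ∧
    ((¬ ∃ c : ℝ, pbar = fun _ => c) ∨ (¬ ∃ c : ℝ, qbar = fun _ => c) →
      0 < (1 / (2 * π)) * ∫ τ in (0:ℝ)..(2 * π),
            ∑ i, (Real.sin τ * pbar i + Real.cos τ * qbar i) *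
              softmax (a • (Real.sin τ • pbar + Real.cos τ • qbar)) i) := by
  set v : ℝ → Fin n → ℝ := fun τ => sin τ • pbar + cos τ • qbar with hv
  have hv_add_pi (τ : ℝ) : v (τ + π) = -v τ := by
    simp only [hv, sin_add_pi, cos_add_pi, neg_smul, neg_add]
  have hcont : Continuous fun τ => softmaxMean a (v τ) :=
    (continuous_softmaxMean a).comp (by fun_prop)
  have hcont_neg : Continuous fun τ => softmaxMean a (-v τ) :=
    (continuous_softmaxMean a).comp (by fun_prop)
  have hsplit : ∫ τ in 0..2 * π, softmaxMean a (v τ) =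
      ∫ τ in 0..π, (softmaxMean a (v τ) + softmaxMean a (-v τ)) := by
    simp only [integral_zero_two_mul_eq_integral_add_shift hcont, hv_add_pi]
  change 0 ≤ 1 / (2 * π) * ∫ τ in 0..2 * π, softmaxMean a (v τ) ∧
    (_ → 0 < 1 / (2 * π) * ∫ τ in 0..2 * π, softmaxMean a (v τ))
  rw [hsplit]
  refine ⟨mul_nonneg (by positivity) (intervalIntegral.integral_nonneg pi_pos.le
    fun τ _ => softmaxMean_add_softmaxMean_neg_nonneg ha.le (v τ)), fun hne => ?_⟩
  obtain ⟨τ₀, hτ₀, hv₀⟩ : ∃ τ₀ ∈ Set.Icc 0 π, ∃ i j, v τ₀ i ≠ v τ₀ j := by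
    rcases hne with hp | hq
    · exact ⟨π / 2, ⟨by positivity, by linarith [pi_pos]⟩,
        by simpa [hv] using exists_apply_ne_of_not_exists_eq_const hp⟩
    · exact ⟨0, ⟨le_rfl, pi_pos.le⟩,
        by simpa [hv] using exists_apply_ne_of_not_exists_eq_const hq⟩
  exact mul_pos (by positivity) (intervalIntegral.integral_pos pi_pos
    (hcont.add hcont_neg).continuousOn
    (fun τ _ => softmaxMean_add_softmaxMean_neg_nonneg ha.le (v τ))
    ⟨τ₀, hτ₀, softmaxMean_add_softmaxMean_neg_pos ha hv₀⟩)
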